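/- There exists a constant C > 0 such that for every tournament H with p(H) ≥ 3 and every N, there exists an H-free tournament G with |G| ≥ N and tr(G) ≤ |G|^(C·log(log(p(H)))/log(p(H))). -/

import Mathlib

open Finset

attribute [local instance] Classical.propDecidable

/-- A tournament on vertex set `Fin n`: for every pair of distinct vertices exactly one
direction is present, and no vertex is adjacent to itself. -/
structure Tournament where
  n : ℕ
  adj : Fin n → Fin n → Prop
  asymm : ∀ u v, adj u v → ¬ adj v u
  total : ∀ u v, u ≠ v → adj u v ∨ adj v u

namespace Tournament

/-- `S` is a transitive set: the adjacency relation restricted to `S` is a strict linear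
order (by the tournament axioms this is equivalent to transitivity on `S`). -/
def IsTransitiveSet (T : Tournament) (S : Finset (Fin T.n)) : Prop :=
  ∀ a ∈ S, ∀ b ∈ S, ∀ c ∈ S, T.adj a b → T.adj b c → T.adj a c

/-- `tr T`: the maximum size of a transitive subset of the vertices of `T`. -/
noncomputable def transNum (T : Tournament) : ℕ :=
  sSup {m | ∃ S : Finset (Fin T.n), T.IsTransitiveSet S ∧ S.card = m}

/-- `T` contains an induced copy of `H`. -/
def Contains (T H : Tournament) : Prop :=
  ∃ f : Fin H.n → Fin T.n, Function.Injective f ∧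
    ∀ u v : Fin H.n, H.adj u v ↔ T.adj (f u) (f v)

/-- `T` is `H`-free: no set of vertices of `T` induces a subtournament isomorphic to `H`. -/
def HFree (T H : Tournament) : Prop := ¬ T.Contains H

/-- `S` is a homogeneous set of `T`. -/
def IsHomogeneous (T : Tournament) (S : Finset (Fin T.n)) : Prop :=
  ∀ v, v ∉ S → (∀ s ∈ S, T.adj v s) ∨ (∀ s ∈ S, T.adj s v)

/-- A tournament is prime if it has no nontrivial homogeneous set. -/
def IsPrime (T : Tournament) : Prop :=
  ¬ ∃ S : Finset (Fin T.n), T.IsHomogeneous S ∧ 1 < S.card ∧ S.card < T.n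

/-- The backward-edge graph of `T` under the ordering `σ` (where `σ p` is the vertex in
position `p`): `u` and `v` are joined iff the tournament edge between them goes from the
later position to the earlier one. -/
def backAdj (T : Tournament) (σ : Equiv.Perm (Fin T.n)) (u v : Fin T.n) : Prop :=
  (σ.symm u < σ.symm v ∧ T.adj v u) ∨ (σ.symm v < σ.symm u ∧ T.adj u v)

/-- `σ` is a galaxy ordering of `T` with center assignment `ctr` (mapping each vertex to the
center of its star component, centers and singletons being fixed points): every backward edge
joins a leaf to its center, each star is a left star or a right star, and no center of a star
lies between two leaves of another star. -/
def IsGalaxyOrdering (T : Tournament) (σ : Equiv.Perm (Fin T.n))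
    (ctr : Fin T.n → Fin T.n) : Prop :=
  (∀ v, ctr (ctr v) = ctr v) ∧
  (∀ v, ctr v ≠ v → T.backAdj σ v (ctr v)) ∧
  (∀ u v, T.backAdj σ u v → (ctr u = u ∧ ctr v = u) ∨ (ctr v = v ∧ ctr u = v)) ∧
  (∀ c, ctr c = c →
    (∀ v, ctr v = c → v = c ∨ σ.symm v < σ.symm c) ∨
    (∀ v, ctr v = c → v = c ∨ σ.symm c < σ.symm v)) ∧
  (∀ c, ctr c = c → (∃ v, v ≠ c ∧ ctr v = c) →
    ∀ l₁ l₂, l₁ ≠ ctr l₁ → l₂ ≠ ctr l₂ → ctr l₁ = ctr l₂ → ctr l₁ ≠ c →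
      ¬ (σ.symm l₁ < σ.symm c ∧ σ.symm c < σ.symm l₂))

/-- A tournament is a galaxy if it admits a galaxy ordering. -/
def IsGalaxy (T : Tournament) : Prop := ∃ σ ctr, T.IsGalaxyOrdering σ ctr

/-- A tournament is a star: it has an ordering of its vertices under which the backward-edge
graph is connected and is a star `K_{1,t}` whose center comes before all its leaves or after
all its leaves. -/
def IsStar (T : Tournament) : Prop :=
  ∃ (σ : Equiv.Perm (Fin T.n)) (c : Fin T.n),
    (∀ v, v ≠ c → T.backAdj σ c v) ∧
    (∀ u v, T.backAdj σ u v → u = c ∨ v = c) ∧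
    ((∀ v, v ≠ c → σ.symm c < σ.symm v) ∨ (∀ v, v ≠ c → σ.symm v < σ.symm c))

/-- `P` is a partition of the vertex set of `T` into transitive sets. -/
def IsTransPartition (T : Tournament) (P : Finset (Finset (Fin T.n))) : Prop :=
  (∀ S ∈ P, T.IsTransitiveSet S) ∧ ∀ v : Fin T.n, ∃! S, S ∈ P ∧ v ∈ S

/-- The chromatic number of `T`: the least number of parts in a partition of the vertices of
`T` into transitive sets. -/
noncomputable def chromaticNum (T : Tournament) : ℕ :=
  sInf {m | ∃ P : Finset (Finset (Fin T.n)), T.IsTransPartition P ∧ P.card = m}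

/-- The directed density from `X` to `Y`. -/
noncomputable def density (T : Tournament) (X Y : Finset (Fin T.n)) : ℝ :=
  (((X ×ˢ Y).filter fun p => T.adj p.1 p.2).card : ℝ) / ((X.card : ℝ) * (Y.card : ℝ))

/-- Common part of the definitions of l-sequences and m-sequences: pairwise disjoint
nonempty sets with density at least `1 - lam` forwards. -/
def SeqBase (T : Tournament) (lam : ℝ) (m : ℕ) (S : Fin m → Finset (Fin T.n)) : Prop :=
  (∀ i, (S i).Nonempty) ∧ (∀ i j, i ≠ j → Disjoint (S i) (S j)) ∧
  ∀ i j : Fin m, i < j → 1 - lam ≤ T.density (S i) (S j)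

/-- A `(c, lam)`-l-sequence: every set is `c`-linear. -/
def IsLSeq (T : Tournament) (c lam : ℝ) (m : ℕ) (S : Fin m → Finset (Fin T.n)) : Prop :=
  T.SeqBase lam m S ∧ ∀ i, c * (T.n : ℝ) ≤ ((S i).card : ℝ)

/-- A `(c₁, c₂, lam, eps)`-m-sequence: sets in odd positions (even `0`-based indices) are
`c₂`-linear, sets in even positions are transitive and `(c₁, eps)`-big. -/
def IsMSeq (T : Tournament) (c₁ c₂ lam eps : ℝ) (m : ℕ)
    (S : Fin m → Finset (Fin T.n)) : Prop :=
  T.SeqBase lam m S ∧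
  (∀ i : Fin m, (i : ℕ) % 2 = 0 → c₂ * (T.n : ℝ) ≤ ((S i).card : ℝ)) ∧
  (∀ i : Fin m, (i : ℕ) % 2 = 1 →
    T.IsTransitiveSet (S i) ∧ c₁ * (T.n : ℝ) ^ eps ≤ ((S i).card : ℝ))

/-- A sequence of sets is smooth if the `1 - lam` density condition holds pointwise. -/
def Smooth (T : Tournament) (lam : ℝ) (m : ℕ) (S : Fin m → Finset (Fin T.n)) : Prop :=
  ∀ i j : Fin m, i < j →
    (∀ v ∈ S i, 1 - lam ≤ T.density {v} (S j)) ∧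
    (∀ v ∈ S j, 1 - lam ≤ T.density (S i) {v})

/-- `P` is a partition of the vertex set of `T` into homogeneous sets. -/
def IsHomogeneousPartition (T : Tournament) (P : Finset (Finset (Fin T.n))) : Prop :=
  (∀ A ∈ P, A.Nonempty ∧ T.IsHomogeneous A) ∧ ∀ v : Fin T.n, ∃! A, A ∈ P ∧ v ∈ A

/-- `p T`: the least number of parts of a nontrivial homogeneous partition. -/
noncomputable def partNum (T : Tournament) : ℕ :=
  sInf {m | ∃ P : Finset (Finset (Fin T.n)),
    T.IsHomogeneousPartition P ∧ 1 < P.card ∧ P.card = m}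

/-- `T` is `H`-far: for every nontrivial homogeneous partition `P` of the vertices of `H`,
`T` contains no subtournament isomorphic to the quotient tournament `H_P`. -/
def HFar (T H : Tournament) : Prop :=
  ∀ P : Finset (Finset (Fin H.n)), H.IsHomogeneousPartition P → 1 < P.card →
    ¬ ∃ g : {A // A ∈ P} → Fin T.n, Function.Injective g ∧
        ∀ A B : {A // A ∈ P}, A ≠ B →
          ((∀ a ∈ A.1, ∀ b ∈ B.1, H.adj a b) ↔ T.adj (g A) (g B))

end Tournament

open Tournament

/-! Let `p = p(H)` and take a tournament `P` on `p - 1` vertices with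
`tr(P) ≤ 2 log₂ (p - 1) + 3`, which exists by the Erdős–Moser counting argument. Its
lexicographic powers have `(p - 1) ^ m` vertices and transitive number at most `tr(P) ^ m`, and
they are `H`-free: a copy of `H` inside `P[Q]` either lies in a single copy of `Q`, or its traces
on the copies of `Q` form a nontrivial homogeneous partition of `H` with at most `p - 1` parts.
Finally,
`2 log₂ (p - 1) + 3 ≤ 6 log p ≤ (log p) ^ 56 ≤ (p - 1) ^ (112 log log p / log p)`. -/

lemma exists_enum_of_isStrictTotalOrder {α : Type*} [Fintype α] (r : α → α → Prop)
    [IsStrictTotalOrder α r] {n : ℕ} (hn : Fintype.card α = n) :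
    ∃ e : Fin n → α, Function.Injective e ∧ ∀ i j, i < j → r (e i) (e j) :=
  letI := linearOrderOfSTO r
  let e := Fintype.orderIsoFinOfCardEq α hn
  ⟨e, e.injective, fun _ _ hij => e.strictMono hij⟩

namespace Tournament

variable {T : Tournament}

lemma adj_irrefl (v : Fin T.n) : ¬ T.adj v v := fun h => T.asymm v v h h

lemma ne_of_adj {u v : Fin T.n} (h : T.adj u v) : u ≠ v := by
  rintro rfl
  exact adj_irrefl u h

lemma IsTransitiveSet.mono {S S' : Finset (Fin T.n)} (hS : T.IsTransitiveSet S) (h : S' ⊆ S) :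
    T.IsTransitiveSet S' :=
  fun a ha b hb c hc => hS a (h ha) b (h hb) c (h hc)

lemma bddAbove_transitive_cards (T : Tournament) :
    BddAbove {m | ∃ S : Finset (Fin T.n), T.IsTransitiveSet S ∧ #S = m} := by
  refine ⟨T.n, ?_⟩
  rintro _ ⟨S, -, rfl⟩
  simpa using card_le_univ S

lemma exists_isTransitiveSet_card_eq_transNum (T : Tournament) :
    ∃ S, T.IsTransitiveSet S ∧ #S = T.transNum :=
  Nat.sSup_mem (s := {m | ∃ S : Finset (Fin T.n), T.IsTransitiveSet S ∧ #S = m})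
    ⟨0, ∅, fun a ha => absurd ha (notMem_empty a), card_empty⟩ T.bddAbove_transitive_cards

lemma IsTransitiveSet.card_le_transNum {S : Finset (Fin T.n)} (hS : T.IsTransitiveSet S) :
    #S ≤ T.transNum :=
  le_csSup T.bddAbove_transitive_cards ⟨S, hS, rfl⟩

lemma IsTransitiveSet.image {T' : Tournament} {S : Finset (Fin T.n)} (hS : T.IsTransitiveSet S)
    (φ : Fin T.n → Fin T'.n)
    (hφ : ∀ u ∈ S, ∀ v ∈ S, φ u ≠ φ v → (T.adj u v ↔ T'.adj (φ u) (φ v))) :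
    T'.IsTransitiveSet (S.image φ) := by
  simp only [IsTransitiveSet, mem_image, forall_exists_index, and_imp]
  rintro _ u hu rfl _ v hv rfl _ w hw rfl huv hvw
  have huw : φ u ≠ φ w := by
    intro h
    exact T'.asymm _ _ huv (h ▸ hvw)
  exact (hφ u hu w hw huw).1 (hS u hu v hv w hw ((hφ u hu v hv (ne_of_adj huv)).2 huv)
    ((hφ v hv w hw (ne_of_adj hvw)).2 hvw))

lemma IsTransitiveSet.exists_enum {S : Finset (Fin T.n)} (hS : T.IsTransitiveSet S) :
    ∃ g : Fin #S → Fin T.n, Function.Injective g ∧ ∀ i j, i < j → T.adj (g i) (g j) := by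
  have : IsStrictTotalOrder S (fun a b => T.adj a b) :=
    { trichotomous := fun a b hab hba => by
        by_contra h
        exact (T.total a b (Subtype.coe_ne_coe.2 h)).elim hab hba
      irrefl := fun a => adj_irrefl (a : Fin T.n)
      trans := fun a b c => hS a a.2 b b.2 c c.2 }
  obtain ⟨e, he, hlt⟩ :=
    exists_enum_of_isStrictTotalOrder (fun a b : S => T.adj a b) (Fintype.card_coe S)
  exact ⟨fun i => e i, Subtype.val_injective.comp he, hlt⟩

lemma IsHomogeneousPartition.card_le {P : Finset (Finset (Fin T.n))}
    (hP : T.IsHomogeneousPartition P) : #P ≤ T.n := by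
  have hdisj : (P : Set (Finset (Fin T.n))).PairwiseDisjoint id := by
    intro A hA B hB hAB
    refine disjoint_left.2 fun v hvA hvB => hAB ?_
    exact (hP.2 v).unique ⟨hA, hvA⟩ ⟨hB, hvB⟩
  calc #P ≤ #(P.biUnion id) := card_le_card_biUnion hdisj fun A hA => (hP.1 A hA).1
    _ ≤ T.n := by simpa using card_le_univ (P.biUnion id)

lemma partNum_le_n (T : Tournament) : T.partNum ≤ T.n := by
  rcases Set.eq_empty_or_nonempty
    {m | ∃ P : Finset (Finset (Fin T.n)), T.IsHomogeneousPartition P ∧ 1 < #P ∧ #P = m}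
    with h | h
  · simp [partNum, h]
  · obtain ⟨P, hP, -, hm⟩ := Nat.sInf_mem h
    exact (partNum.eq_def T ▸ hm) ▸ hP.card_le

/-- The fibres of `φ` form a nontrivial homogeneous partition. -/
lemma partNum_le_card_of_fibers {α : Type*} [Fintype α] (φ : Fin T.n → α)
    (r : α → α → Prop)
    (hφ : ∀ u v, φ u ≠ φ v → (T.adj u v ↔ r (φ u) (φ v))) {u₀ v₀ : Fin T.n}
    (h₀ : φ u₀ ≠ φ v₀) : T.partNum ≤ Fintype.card α := by
  set fiber : α → Finset (Fin T.n) := fun a => univ.filter (φ · = a)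
  set P := (univ.image φ).image fiber
  have hmem : ∀ v, fiber (φ v) ∈ P := fun v =>
    mem_image_of_mem _ (mem_image_of_mem _ (mem_univ v))
  have hpart : T.IsHomogeneousPartition P := by
    refine ⟨?_, fun v => ⟨fiber (φ v), ⟨hmem v, by simp [fiber]⟩, ?_⟩⟩
    · simp only [P, mem_image, mem_univ, true_and]
      rintro _ ⟨_, ⟨w, rfl⟩, rfl⟩
      refine ⟨⟨w, by simp [fiber]⟩, fun v hv => ?_⟩
      have hvw : φ v ≠ φ w := by simpa [fiber] using hv
      by_cases hr : r (φ v) (φ w)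
      · left
        intro s hs
        have hs : φ s = φ w := by simpa [fiber] using hs
        exact (hφ v s (hs ▸ hvw)).2 (hs ▸ hr)
      · right
        intro s hs
        have hs : φ s = φ w := by simpa [fiber] using hs
        refine (T.total v s fun h => hvw (h ▸ hs)).resolve_left fun h => hr ?_
        exact hs ▸ (hφ v s (hs ▸ hvw)).1 h
    · simp only [P, mem_image, mem_univ, true_and]
      rintro _ ⟨⟨_, ⟨w, rfl⟩, rfl⟩, hv⟩
      simp only [fiber, mem_filter, mem_univ, true_and] at hv
      rw [hv]
  have hcard : 1 < #P := by
    refine one_lt_card.2 ⟨_, hmem u₀, _, hmem v₀, fun h => h₀ ?_⟩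
    have hu : u₀ ∈ fiber (φ v₀) := h ▸ (by simp [fiber])
    simpa [fiber] using hu
  calc T.partNum ≤ #P := Nat.sInf_le ⟨P, hpart, hcard, rfl⟩
    _ ≤ Fintype.card α := card_image_le.trans (card_le_univ _)

section LexProd

/-- The lexicographic product: a copy of `Q` is substituted for every vertex of `P`. A vertex
`u` stands for the pair `(u.divNat, u.modNat)` under `finProdFinEquiv`. -/
abbrev lexProd (P Q : Tournament) : Tournament where
  n := P.n * Q.n
  adj u v := if u.divNat = v.divNat then Q.adj u.modNat v.modNat else P.adj u.divNat v.divNat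
  asymm u v := by
    by_cases h : u.divNat = v.divNat
    · simpa [h] using Q.asymm _ _
    · simpa [h, Ne.symm h] using P.asymm _ _
  total u v huv := by
    by_cases h : u.divNat = v.divNat
    · have h' : u.modNat ≠ v.modNat := fun h' =>
        huv (finProdFinEquiv.symm.injective (Prod.ext h h'))
      simpa [h] using Q.total _ _ h'
    · simpa [h, Ne.symm h] using P.total _ _ h

variable {P Q : Tournament} {u v : Fin (P.n * Q.n)}

lemma lexProd_adj_of_divNat_eq (h : u.divNat = v.divNat) :
    (P.lexProd Q).adj u v ↔ Q.adj u.modNat v.modNat := by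
  simp [h]

lemma lexProd_adj_of_divNat_ne (h : u.divNat ≠ v.divNat) :
    (P.lexProd Q).adj u v ↔ P.adj u.divNat v.divNat := by
  simp [h]

lemma transNum_lexProd_le (P Q : Tournament) :
    (P.lexProd Q).transNum ≤ P.transNum * Q.transNum := by
  obtain ⟨S, hS, hcard⟩ := (P.lexProd Q).exists_isTransitiveSet_card_eq_transNum
  have hfiber : ∀ a ∈ S.image Fin.divNat, #(S.filter (·.divNat = a)) ≤ Q.transNum := by
    intro a _
    have hinj : Set.InjOn (Fin.modNat (m := P.n) (n := Q.n)) ↑(S.filter (·.divNat = a)) := by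
      intro u hu v hv h
      simp only [coe_filter] at hu hv
      exact finProdFinEquiv.symm.injective (Prod.ext (hu.2.trans hv.2.symm) h)
    rw [← card_image_of_injOn hinj]
    refine (IsTransitiveSet.image (hS.mono (filter_subset _ _)) _ ?_).card_le_transNum
    intro u hu v hv _
    simp only [mem_filter] at hu hv
    exact lexProd_adj_of_divNat_eq (hu.2.trans hv.2.symm)
  rw [← hcard]
  calc #S ≤ Q.transNum * #(S.image Fin.divNat) := card_le_mul_card_image S _ hfiber
    _ ≤ Q.transNum * P.transNum := by
      gcongr
      exact (hS.image _ fun u _ v _ h => lexProd_adj_of_divNat_ne h).card_le_transNum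
    _ = P.transNum * Q.transNum := mul_comm _ _

lemma Contains.partNum_le_or_of_lexProd {H : Tournament} (h : (P.lexProd Q).Contains H) :
    H.partNum ≤ P.n ∨ Q.Contains H := by
  obtain ⟨f, hf, hadj⟩ := h
  by_cases hconst : ∀ u v, (f u).divNat = (f v).divNat
  · refine Or.inr ⟨fun v => (f v).modNat, fun u v h => hf ?_, fun u v => ?_⟩
    · exact finProdFinEquiv.symm.injective (Prod.ext (hconst u v) h)
    · exact (hadj u v).trans (lexProd_adj_of_divNat_eq (hconst u v))
  · push Not at hconst
    obtain ⟨u₀, v₀, h₀⟩ := hconst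
    refine Or.inl ?_
    simpa using H.partNum_le_card_of_fibers (fun v => (f v).divNat) P.adj
      (fun u v h => (hadj u v).trans (lexProd_adj_of_divNat_ne h)) h₀

/-- `P.lexPow m` is the lexicographic product of `m + 1` copies of `P`. -/
def lexPow (P : Tournament) : ℕ → Tournament
  | 0 => P
  | m + 1 => P.lexProd (P.lexPow m)

lemma n_lexPow (P : Tournament) (m : ℕ) : (P.lexPow m).n = P.n ^ (m + 1) := by
  induction m with
  | zero => simp [lexPow]
  | succ m ih => simp [lexPow, lexProd, ih, pow_succ' P.n (m + 1)]

lemma transNum_lexPow_le (P : Tournament) (m : ℕ) :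
    (P.lexPow m).transNum ≤ P.transNum ^ (m + 1) := by
  induction m with
  | zero => simp [lexPow]
  | succ m ih =>
    calc (P.lexPow (m + 1)).transNum ≤ P.transNum * (P.lexPow m).transNum :=
          transNum_lexProd_le P _
      _ ≤ P.transNum * P.transNum ^ (m + 1) := by gcongr
      _ = P.transNum ^ (m + 2) := (pow_succ' _ _).symm

lemma hFree_lexPow {H : Tournament} (hP : P.n < H.partNum) (m : ℕ) : (P.lexPow m).HFree H := by
  induction m with
  | zero =>
    rintro ⟨f, hf, -⟩
    have := Fintype.card_le_of_injective f hf
    simp only [Fintype.card_fin] at this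
    exact absurd (H.partNum_le_n.trans this) (by simp [lexPow]; omega)
  | succ m ih => exact fun h => (Contains.partNum_le_or_of_lexProd h).elim (by omega) ih

end LexProd

/-- For `u < v`, `f s(u, v)` records whether the edge between `u` and `v` points from `u` to
`v`. -/
def ofOrientation (k : ℕ) (f : Sym2 (Fin k) → Bool) : Tournament where
  n := k
  adj u v := u ≠ v ∧ f s(u, v) = decide (u < v)
  asymm u v := by
    rintro ⟨huv, h₁⟩ ⟨-, h₂⟩
    rw [Sym2.eq_swap, h₁] at h₂
    rcases lt_or_gt_of_ne huv with h | h <;> simp [h, h.not_gt] at h₂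
  total u v huv := by
    rw [Sym2.eq_swap (a := v)]
    rcases lt_or_gt_of_ne huv with h | h <;> cases f s(u, v) <;> simp [h, h.not_gt, huv, huv.symm]

noncomputable def enumOrientations {k t : ℕ} (g : Fin t → Fin k) :
    Finset (Sym2 (Fin k) → Bool) :=
  univ.filter fun f =>
    Function.Injective g ∧ ∀ i j, i < j → (ofOrientation k f).adj (g i) (g j)

/-- The `t.choose 2` edges inside the image of `g` are forced. -/
lemma two_pow_mul_card_enumOrientations_le {k t : ℕ} (g : Fin t → Fin k) :
    2 ^ t.choose 2 * #(enumOrientations g) ≤ 2 ^ Fintype.card (Sym2 (Fin k)) := by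
  by_cases hg : Function.Injective g
  swap
  · simp [enumOrientations, hg]
  set C := (univ.filter fun z : Sym2 (Fin t) => ¬ z.IsDiag).image (Sym2.map g)
  have hC : #C = t.choose 2 := by
    rw [card_image_of_injective _ (Sym2.map.injective hg), ← Fintype.card_subtype,
      Sym2.card_subtype_not_diag, Fintype.card_fin]
  have hforced : ∀ f ∈ enumOrientations g, ∀ i j, i < j →
      f s(g i, g j) = decide (g i < g j) :=
    fun f hf i j hij => ((mem_filter.1 hf).2.2 i j hij).2
  have hinj : Set.InjOn (fun (f : Sym2 (Fin k) → Bool) (z : ↥Cᶜ) => f z)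
      ↑(enumOrientations g) := by
    intro f₁ hf₁ f₂ hf₂ h
    funext z
    by_cases hz : z ∈ C
    · obtain ⟨w, hw, rfl⟩ := mem_image.1 hz
      induction w using Sym2.ind with
      | h i j =>
        have hij : i ≠ j := by simpa using hw
        rw [Sym2.map_mk]
        rcases lt_or_gt_of_ne hij with hij | hij
        · rw [hforced f₁ hf₁ i j hij, hforced f₂ hf₂ i j hij]
        · rw [Sym2.eq_swap, hforced f₁ hf₁ j i hij, hforced f₂ hf₂ j i hij]
    · exact congrFun h ⟨z, mem_compl.2 hz⟩
  calc 2 ^ t.choose 2 * #(enumOrientations g)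
      ≤ 2 ^ t.choose 2 * #(univ : Finset (↥Cᶜ → Bool)) := by
        gcongr
        exact card_le_card_of_injOn _ (fun _ _ => mem_univ _) hinj
    _ = 2 ^ Fintype.card (Sym2 (Fin k)) := by
      rw [card_univ, Fintype.card_fun, Fintype.card_bool, Fintype.card_coe, ← hC, ← pow_add,
        card_add_card_compl]

/-- Erdős–Moser, by a union bound over the `k ^ t` maps `Fin t → Fin k`. -/
theorem exists_transNum_lt {k t : ℕ} (h : k ^ t < 2 ^ t.choose 2) :
    ∃ P : Tournament, P.n = k ∧ P.transNum < t := by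
  set bad := (univ : Finset (Fin t → Fin k)).biUnion enumOrientations
  have hbad : #bad < 2 ^ Fintype.card (Sym2 (Fin k)) := by
    refine lt_of_mul_lt_mul_left (a := 2 ^ t.choose 2) ?_ (Nat.zero_le _)
    calc 2 ^ t.choose 2 * #bad
        ≤ ∑ g : Fin t → Fin k, 2 ^ t.choose 2 * #(enumOrientations g) := by
          rw [← mul_sum]
          exact Nat.mul_le_mul_left _ card_biUnion_le
      _ ≤ k ^ t * 2 ^ Fintype.card (Sym2 (Fin k)) := by
          refine (sum_le_card_nsmul univ _ _ fun g _ =>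
            two_pow_mul_card_enumOrientations_le g).trans_eq ?_
          simp
      _ < 2 ^ t.choose 2 * 2 ^ Fintype.card (Sym2 (Fin k)) := by gcongr
  obtain ⟨f, hf⟩ : ∃ f, f ∉ bad := by
    by_contra! hall
    simp [eq_univ_of_forall hall] at hbad
  refine ⟨ofOrientation k f, rfl, ?_⟩
  obtain ⟨S, hS, hcard⟩ := (ofOrientation k f).exists_isTransitiveSet_card_eq_transNum
  rw [← hcard]
  by_contra! hle
  obtain ⟨S', hS'S, rfl⟩ := exists_subset_card_eq hle
  obtain ⟨g, hg, hlt⟩ := (hS.mono hS'S).exists_enum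
  exact hf (mem_biUnion.2 ⟨g, mem_univ _, by
    simpa [enumOrientations] using ⟨hg, hlt⟩⟩)

theorem exists_transNum_le_two_mul_log (k : ℕ) :
    ∃ P : Tournament, P.n = k ∧ P.transNum ≤ 2 * Nat.log 2 k + 3 := by
  set L := Nat.log 2 k
  have hk : k < 2 ^ (L + 1) := Nat.lt_pow_succ_log_self one_lt_two k
  have hchoose : (L + 1) * (2 * L + 4) ≤ (2 * L + 4).choose 2 := by
    rw [Nat.choose_two_right, Nat.le_div_iff_mul_le two_pos,
      show 2 * L + 4 - 1 = 2 * L + 3 by omega]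
    nlinarith
  obtain ⟨P, hP, htr⟩ := exists_transNum_lt (k := k) (t := 2 * L + 4) <| calc
    k ^ (2 * L + 4) < (2 ^ (L + 1)) ^ (2 * L + 4) := Nat.pow_lt_pow_left hk (by omega)
    _ ≤ 2 ^ (2 * L + 4).choose 2 := by
      rw [← pow_mul]
      exact Nat.pow_le_pow_right two_pos hchoose
  exact ⟨P, hP, by omega⟩

end Tournament

lemma six_mul_le_pow {x : ℝ} (hx : 12 / 11 ≤ x) : 6 * x ≤ x ^ 56 := by
  have h : 6 ≤ x ^ 55 := calc
    (6 : ℝ) = 1 + (55 : ℕ) * (1 / 11) := by norm_num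
    _ ≤ (1 + 1 / 11) ^ 55 := one_add_mul_le_pow (by norm_num) 55
    _ ≤ x ^ 55 := by gcongr; linarith
  calc 6 * x ≤ x ^ 55 * x := by gcongr
    _ = x ^ 56 := by ring

open Real in
lemma two_mul_log_add_three_le_rpow {p : ℕ} (hp : 3 ≤ p) :
    ((2 * Nat.log 2 (p - 1) + 3 : ℕ) : ℝ) ≤
      ((p - 1 : ℕ) : ℝ) ^ (112 * log (log p) / log p) := by
  set k := p - 1
  have hk : (2 : ℝ) ≤ k := by exact_mod_cast (show 2 ≤ k by omega)
  have hpk : (p : ℝ) = k + 1 := by simp [k, Nat.cast_sub (show 1 ≤ p by omega)]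
  set ℓ := log p
  have hℓ : 12 / 11 ≤ ℓ := calc
    (12 / 11 : ℝ) ≤ log 3 := by linarith [log_three_gt_d9]
    _ ≤ ℓ := log_le_log (by norm_num) (by exact_mod_cast hp)
  have hlogk : log k ≤ ℓ := log_le_log (by linarith) (by linarith)
  have hℓk : ℓ ≤ 2 * log k := calc
    ℓ ≤ log ((k : ℝ) ^ 2) := log_le_log (by linarith) (by nlinarith)
    _ = 2 * log k := by rw [log_pow]; norm_num
  have hL : (Nat.log 2 k : ℝ) * log 2 ≤ log k := by
    have := natLog_le_logb k 2
    rwa [logb, Nat.cast_ofNat, le_div_iff₀ (log_pos one_lt_two)] at this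
  have hlogℓ : 0 ≤ log ℓ := log_nonneg (by linarith)
  calc ((2 * Nat.log 2 k + 3 : ℕ) : ℝ) ≤ 6 * ℓ := by
        push_cast
        nlinarith [log_two_gt_d9]
    _ ≤ ℓ ^ 56 := six_mul_le_pow hℓ
    _ = exp (56 * log ℓ) := by
        rw [← rpow_natCast, rpow_def_of_pos (by linarith), mul_comm]; norm_num
    _ ≤ exp (log k * (112 * log ℓ / ℓ)) := by
        refine exp_le_exp.2 ?_
        rw [mul_div_assoc', le_div_iff₀ (by linarith)]
        nlinarith
    _ = (k : ℝ) ^ (112 * log ℓ / ℓ) := (rpow_def_of_pos (by linarith) _).symm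

/-- There exists a constant C > 0 such that for every tournament H with
p(H) ≥ 3 and every N, there exists an H-free tournament G with |G| ≥ N and
tr(G) ≤ |G|^(C·log(log(p(H)))/log(p(H))). -/
theorem stmt15 :
    ∃ C : ℝ, 0 < C ∧
      ∀ H : Tournament, 3 ≤ H.partNum → ∀ N : ℕ,
        ∃ G : Tournament, G.HFree H ∧ N ≤ G.n ∧
          (G.transNum : ℝ) ≤ (G.n : ℝ) ^
            (C * Real.log (Real.log (H.partNum : ℝ)) / Real.log (H.partNum : ℝ)) := by
  refine ⟨112, by norm_num, fun H hH N => ?_⟩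
  obtain ⟨P, hPn, hPtr⟩ := exists_transNum_le_two_mul_log (H.partNum - 1)
  refine ⟨P.lexPow N, hFree_lexPow (by omega) N, ?_, ?_⟩
  · rw [n_lexPow, hPn]
    calc N ≤ 2 ^ (N + 1) := (Nat.lt_two_pow_self.trans (Nat.pow_lt_pow_succ one_lt_two)).le
      _ ≤ (H.partNum - 1) ^ (N + 1) := Nat.pow_le_pow_left (by omega) _
  · set E := 112 * Real.log (Real.log (H.partNum : ℝ)) / Real.log (H.partNum : ℝ)
    have hk : (0 : ℝ) ≤ ((H.partNum - 1 : ℕ) : ℝ) := Nat.cast_nonneg _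
    rw [n_lexPow, hPn, Nat.cast_pow, ← Real.rpow_natCast_mul hk, mul_comm,
      Real.rpow_mul_natCast hk]
    calc ((P.lexPow N).transNum : ℝ) ≤ (P.transNum : ℝ) ^ (N + 1) := by
          exact_mod_cast transNum_lexPow_le P N
      _ ≤ (((H.partNum - 1 : ℕ) : ℝ) ^ E) ^ (N + 1) := by
          gcongr
          exact (Nat.cast_le.2 hPtr).trans (two_mul_log_add_three_le_rpow hH)
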